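/- For all X, Y ∈ L and all integers j, k ≥ 0, the commutator [ad(X)^{p^j}, ad(Y)^{p^k}] (computed in End(L)) lies in ad(L), the image of the adjoint map. In particular, the set of finite sums Σ_{i=0}^{m} ad(X_i)^{p^i} is closed under the Lie bracket of Der(L). -/

import Mathlib

/-!
In characteristic `p`, `ad a = L_a - R_a` is a difference of commuting operators, so
`ad (a ^ p ^ n) = (ad a) ^ p ^ n` in any associative algebra. In `End L` this gives
`⁅ad X ^ p ^ j, ad Y⁆ = ad ((ad X ^ p ^ j) Y)`, and then
`⁅ad X ^ p ^ j, ad Y ^ p ^ l⁆ = -(ad (ad Y)) ^ p ^ l (ad X ^ p ^ j)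
  = ad ((ad Y ^ (p ^ l - 1)) ((ad X ^ p ^ j) Y))`.
-/

universe u v

namespace LieAlgebra

section

attribute [local instance 100] LieRing.ofAssociativeRing

variable {R : Type u} [CommRing R]

theorem ad_pow_char_pow {A : Type v} [Ring A] [Algebra R A] (p : ℕ) [Fact p.Prime] [CharP R p]
    (a : A) (n : ℕ) : ad R A (a ^ p ^ n) = ad R A a ^ p ^ n := by
  rcases subsingleton_or_nontrivial A with hA | hA
  · exact Subsingleton.elim _ _
  have : CharP (Module.End R A) p := by
    rw [CharP.charP_iff_prime_eq_zero Fact.out, ← map_natCast (algebraMap R _),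
      CharP.cast_eq_zero, map_zero]
  rw [ad_eq_lmul_left_sub_lmul_right, Pi.sub_apply, Pi.sub_apply,
    sub_pow_char_pow_of_commute _ _ (LinearMap.commute_mulLeft_right a a),
    LinearMap.pow_mulLeft, LinearMap.pow_mulRight]

variable {L : Type v} [LieRing L] [LieAlgebra R L]

theorem ad_ad_pow_apply_ad (x y : L) (n : ℕ) :
    (ad R (Module.End R L) (ad R L x) ^ n) (ad R L y) = ad R L ((ad R L x ^ n) y) := by
  have h : (ad R (Module.End R L) (ad R L x)).comp (ad R L).toLinearMap =
      (ad R L).toLinearMap.comp (ad R L x) := by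
    ext z : 1
    simp
  exact LinearMap.congr_fun (Module.End.commute_pow_left_of_commute h n) y

theorem lie_ad_pow_char_pow_ad_pow_char_pow (p : ℕ) [Fact p.Prime] [CharP R p]
    (x y : L) (j l : ℕ) :
    ⁅ad R L x ^ p ^ j, ad R L y ^ p ^ l⁆ =
      ad R L ((ad R L y ^ (p ^ l - 1)) ((ad R L x ^ p ^ j) y)) := by
  set D := ad R L x ^ p ^ j
  have hD : ⁅D, ad R L y⁆ = ad R L (D y) := by
    rw [← ad_apply (R := R), ad_pow_char_pow, ad_ad_pow_apply_ad]
  have hq : p ^ l = p ^ l - 1 + 1 :=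
    (Nat.sub_add_cancel (Nat.one_le_pow _ _ (Fact.out : p.Prime).pos)).symm
  calc ⁅D, ad R L y ^ p ^ l⁆
      = -(ad R (Module.End R L) (ad R L y) ^ p ^ l) D := by
        rw [← ad_pow_char_pow, ad_apply, ← lie_skew]
    _ = (ad R (Module.End R L) (ad R L y) ^ (p ^ l - 1)) ⁅D, ad R L y⁆ := by
        rw [hq, pow_succ, Module.End.mul_apply, ad_apply, ← lie_skew, map_neg, neg_neg, ← hq]
    _ = ad R L ((ad R L y ^ (p ^ l - 1)) (D y)) := by
        rw [hD, ad_ad_pow_apply_ad]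

theorem lie_sum_ad_pow_char_pow_mem_range (p : ℕ) [Fact p.Prime] [CharP R p]
    (s t : Finset ℕ) (x y : ℕ → L) :
    ⁅∑ i ∈ s, ad R L (x i) ^ p ^ i, ∑ i ∈ t, ad R L (y i) ^ p ^ i⁆ ∈
      LinearMap.range (ad R L : L →ₗ[R] Module.End R L) := by
  rw [sum_lie_sum]
  refine Submodule.sum_mem _ fun i _ => Submodule.sum_mem _ fun j _ => ?_
  rw [lie_ad_pow_char_pow_ad_pow_char_pow]
  exact LinearMap.mem_range_self _ _

end

end LieAlgebra

theorem stmt11 (p : ℕ) (hp : 0 < p)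
    (𝕜 : Type u) [Field 𝕜] [CharP 𝕜 p]
    (L : Type v) [LieRing L] [LieAlgebra 𝕜 L] :
    (∀ (X Y : L) (j l : ℕ),
      ⁅(LieAlgebra.ad 𝕜 L X) ^ p ^ j, (LieAlgebra.ad 𝕜 L Y) ^ p ^ l⁆
        ∈ Set.range (LieAlgebra.ad 𝕜 L)) ∧
    (∀ E F : Module.End 𝕜 L,
      (∃ (m : ℕ) (X : ℕ → L),
        E = ∑ i ∈ Finset.range (m + 1), (LieAlgebra.ad 𝕜 L (X i)) ^ p ^ i) →
      (∃ (m : ℕ) (Y : ℕ → L),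
        F = ∑ i ∈ Finset.range (m + 1), (LieAlgebra.ad 𝕜 L (Y i)) ^ p ^ i) →
      ∃ (m : ℕ) (Z : ℕ → L),
        ⁅E, F⁆ = ∑ i ∈ Finset.range (m + 1), (LieAlgebra.ad 𝕜 L (Z i)) ^ p ^ i) := by
  have : Fact p.Prime := ⟨(CharP.char_is_prime_or_zero 𝕜 p).resolve_right hp.ne'⟩
  refine ⟨fun X Y j l =>
    ⟨_, (LieAlgebra.lie_ad_pow_char_pow_ad_pow_char_pow (R := 𝕜) p X Y j l).symm⟩, ?_⟩
  rintro E F ⟨m, X, rfl⟩ ⟨n, Y, rfl⟩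
  obtain ⟨W, hW⟩ := LieAlgebra.lie_sum_ad_pow_char_pow_mem_range (R := 𝕜) p _ _ X Y
  exact ⟨0, fun _ => W, by simpa using hW.symm⟩
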